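/- Let G = (V,E) be a finite undirected unweighted graph, let v ∈ V, let A, B ⊆ V with v ∉ B, let ε > 0 be a real number, let u ∈ B satisfy δ(v,u) = δ(v,B), and let Q be a fixed shortest v–u path in G. Suppose that δ(v,B,x) is finite for every vertex x ≠ v lying on Q, and let h be the maximum of δ(v,B,x) over these vertices x. Then there exists a set S of vertices of Q, with v ∉ S and |S| ≤ ⌊log h / log(1+ε)⌋ + 1, such that for every vertex x ∈ V \ {v}: Ball^x(v,A,B,ε) ⊆ Ball(v,A,B) ∪ ⋃_{x'∈S} Ball^{x'}(v,A,B). -/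

import Mathlib

open scoped ENNReal Classical

/-- The graph `G` with vertex `x` "failed": edges incident to `x` are removed,
so that walks in `G.avoid x` are exactly walks of `G` avoiding `x`
(for endpoints different from `x`). -/
def SimpleGraph.avoid {V : Type*} (G : SimpleGraph V) (x : V) : SimpleGraph V where
  Adj a b := G.Adj a b ∧ a ≠ x ∧ b ≠ x
  symm := ⟨fun _ _ h => ⟨h.1.symm, h.2.2, h.2.1⟩⟩
  loopless := ⟨fun a h => G.loopless.irrefl a h.1⟩

/-- `δ(a,b,x)` : the distance (in `ℕ∞`) between `a` and `b` in `G − x`,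
with the convention that it is `∞` if `a = x` or `b = x`. -/
noncomputable def davoid {V : Type*} (G : SimpleGraph V) (a b x : V) : ℕ∞ :=
  if a = x ∨ b = x then ⊤ else (G.avoid x).edist a b

/-- `δ(v,B)` : distance from `v` to the set `B`. -/
noncomputable def dset {V : Type*} (G : SimpleGraph V) (v : V) (B : Set V) : ℕ∞ :=
  ⨅ w ∈ B, G.edist v w

/-- `δ(v,B,x)` : distance from `v` to the set `B` in `G − x`. -/
noncomputable def dsetAvoid {V : Type*} (G : SimpleGraph V) (v : V) (B : Set V) (x : V) : ℕ∞ :=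
  ⨅ w ∈ B, davoid G v w x

/-- `Ball(v,A,B) = {w ∈ A : δ(v,w) < δ(v,B)}`. -/
def ball {V : Type*} (G : SimpleGraph V) (v : V) (A B : Set V) : Set V :=
  {w ∈ A | G.edist v w < dset G v B}

/-- `Ball^x(v,A,B) = {w ∈ A : δ(v,w,x) < δ(v,B,x)}`. -/
def ballAvoid {V : Type*} (G : SimpleGraph V) (v : V) (A B : Set V) (x : V) : Set V :=
  {w ∈ A | davoid G v w x < dsetAvoid G v B x}

/-- `Ball^x(v,A,B,ε) = {w ∈ A : (1+ε)·δ(v,w,x) < δ(v,B,x)}`. -/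
def ballTrunc {V : Type*} (G : SimpleGraph V) (v : V) (A B : Set V) (x : V) (ε : ℝ) : Set V :=
  {w ∈ A | ENNReal.ofReal (1 + ε) * (davoid G v w x : ℝ≥0∞) < (dsetAvoid G v B x : ℝ≥0∞)}

/-- `C^x(w,A,B,ε) = {v ∈ V : (1+ε)·δ(v,w,x) < δ(v,B,x)}`. -/
def clusterTrunc {V : Type*} (G : SimpleGraph V) (w : V) (B : Set V) (x : V) (ε : ℝ) : Set V :=
  {v | ENNReal.ofReal (1 + ε) * (davoid G v w x : ℝ≥0∞) < (dsetAvoid G v B x : ℝ≥0∞)}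

/-!
Let `L = δ(v,B)` be the length of `Q`. For `x ≠ v` on `Q` we have `L ≤ δ(v,B,x) ≤ h`; sorting these
values into the buckets `[(1+ε)^k, (1+ε)^(k+1))`, `0 ≤ k ≤ ⌊log h / log(1+ε)⌋`, and keeping in each
bucket the vertex farthest along `Q` gives `S`.

Let `w ∈ Ball^x(v,A,B,ε)` and let `P` be a shortest `v`–`w` path in `G − x`. If `P` meets `Q` at a
vertex `y` beyond `x` (when `x ∉ Q`, take `y = v`), then `P` up to `y` followed by `Q` from `y` avoids
`x`, so `|P| < δ(v,B,x)` makes the rest of `P` shorter than the rest of `Q`, and `w ∈ Ball(v,A,B)`.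
Otherwise `P` avoids the vertex `x' ∈ S` kept for the bucket of `x`, and
`(1+ε)|P| < δ(v,B,x) < (1+ε) δ(v,B,x')` gives `w ∈ Ball^{x'}(v,A,B)`.
-/

lemma Real.lt_mul_of_floor_logb_eq {b s t : ℝ} (hb : 1 < b) (hs : 0 < s) (ht : 0 < t)
    (hst : ⌊Real.logb b s⌋ = ⌊Real.logb b t⌋) : s < b * t := by
  have hb0 : 0 < b := by linarith
  rw [← Real.logb_lt_logb_iff hb hs (by positivity), Real.logb_mul hb0.ne' ht.ne',
    Real.logb_self_eq_one hb]
  calc Real.logb b s < ⌊Real.logb b s⌋ + 1 := Int.lt_floor_add_one _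
    _ = ⌊Real.logb b t⌋ + 1 := by rw [hst]
    _ ≤ 1 + Real.logb b t := by linarith [Int.floor_le (Real.logb b t)]

lemma Finset.exists_subset_forall_le_lt_mul {α β : Type*} [LinearOrder β] (T : Finset α)
    (d : α → ℝ) (pos : α → β) {b h : ℝ} (hb : 1 < b)
    (hd : ∀ y ∈ T, 1 ≤ d y ∧ d y ≤ h) :
    ∃ S ⊆ T, S.card ≤ (⌊Real.logb b h⌋ + 1).toNat ∧
      ∀ x ∈ T, ∃ y ∈ S, pos x ≤ pos y ∧ d x < b * d y := by
  obtain rfl | ⟨y₀, -⟩ := T.eq_empty_or_nonempty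
  · exact ⟨∅, by simp⟩
  have : Nonempty α := ⟨y₀⟩
  set bucket : α → ℤ := fun y => ⌊Real.logb b (d y)⌋
  have htop : ∀ n ∈ T.image bucket, ∃ y ∈ T, bucket y = n ∧
      ∀ z ∈ T, bucket z = n → pos z ≤ pos y := by
    intro n hn
    obtain ⟨y, hy, hmax⟩ := (T.filter (bucket · = n)).exists_max_image pos
      (by simpa [Finset.filter_nonempty_iff] using hn)
    rw [Finset.mem_filter] at hy
    exact ⟨y, hy.1, hy.2, fun z hz hzn => hmax z (Finset.mem_filter.2 ⟨hz, hzn⟩)⟩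
  choose! top htopT hbucket hmax using htop
  refine ⟨(T.image bucket).image top, ?_, ?_, ?_⟩
  · simpa [Finset.image_subset_iff] using
      fun y hy => htopT (bucket y) (Finset.mem_image_of_mem _ hy)
  · calc _ ≤ (T.image bucket).card := Finset.card_image_le
      _ ≤ (Finset.Icc 0 ⌊Real.logb b h⌋).card := by
          refine Finset.card_le_card fun n hn => ?_
          obtain ⟨y, hy, rfl⟩ := Finset.mem_image.1 hn
          exact Finset.mem_Icc.2 ⟨Int.floor_nonneg.2 (Real.logb_nonneg hb (hd y hy).1),
            Int.floor_mono (Real.logb_le_logb_of_le hb (by linarith [(hd y hy).1]) (hd y hy).2)⟩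
      _ = _ := by simp
  · intro x hx
    have hn := Finset.mem_image_of_mem bucket hx
    refine ⟨top (bucket x), Finset.mem_image_of_mem _ hn, hmax _ hn x hx rfl, ?_⟩
    have hyT := htopT _ hn
    exact Real.lt_mul_of_floor_logb_eq hb (by linarith [(hd x hx).1]) (by linarith [(hd _ hyT).1])
      (hbucket _ hn).symm

lemma Real.toNat_floor_logb_natCast_add_one {b : ℝ} (hb : 1 ≤ b) (n : ℕ) :
    (((⌊Real.logb b n⌋ + 1).toNat : ℤ) : ℝ) = ⌊Real.logb b n⌋ + 1 := by
  have : 0 ≤ ⌊Real.logb b n⌋ :=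
    Int.floor_nonneg.2 (div_nonneg (Real.log_natCast_nonneg n) (Real.log_nonneg hb))
  rw [Int.toNat_of_nonneg (by omega)]
  push_cast
  rfl

lemma List.Nodup.le_idxOf_of_mem_drop {α : Type*} [DecidableEq α] {l : List α} (hl : l.Nodup)
    {k : ℕ} {a : α} (ha : a ∈ l.drop k) : k ≤ l.idxOf a := by
  obtain ⟨j, hj, rfl⟩ := List.mem_drop_iff_getElem.1 ha
  rw [hl.idxOf_getElem]
  omega

namespace SimpleGraph

variable {V : Type*} {G : SimpleGraph V}

lemma Walk.IsPath.idxOf_le_of_mem_support_dropUntil [DecidableEq V] {u v x y : V}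
    {p : G.Walk u v} (hp : p.IsPath) (hy : y ∈ p.support)
    (hx : x ∈ (p.dropUntil y hy).support) :
    p.support.idxOf y ≤ p.support.idxOf x := by
  have hy' : p.support.idxOf y ≤ p.length := by
    have := List.idxOf_lt_length_iff.2 hy
    rw [p.length_support] at this
    omega
  rw [p.dropUntil_eq_drop hy, Walk.support_copy, Walk.drop_support_eq_support_drop_min,
    min_eq_left hy'] at hx
  exact hp.support_nodup.le_idxOf_of_mem_drop hx

lemma avoid_le (x : V) : G.avoid x ≤ G := fun _ _ h => h.1

lemma Walk.notMem_support_of_avoid {a b x : V} (p : (G.avoid x).Walk a b) (ha : a ≠ x) :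
    x ∉ p.support := by
  induction p with
  | nil => simpa using ha.symm
  | cons h _ ih => simpa [ha.symm] using ih h.2.2

end SimpleGraph

open SimpleGraph

section avoid

variable {V : Type*} {G : SimpleGraph V} {a b v x : V} {A B : Set V}

lemma davoid_le_length (p : G.Walk a b) (hx : x ∉ p.support) : davoid G a b x ≤ p.length := by
  have hp : ∀ e ∈ p.edges, e ∈ (G.avoid x).edgeSet := by
    intro e he
    induction e using Sym2.ind with
    | _ c d => exact ⟨p.adj_of_mem_edges he,
        fun h => hx (h ▸ p.fst_mem_support_of_mem_edges he),
        fun h => hx (h ▸ p.snd_mem_support_of_mem_edges he)⟩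
  rw [davoid, if_neg (by rintro (rfl | rfl) <;> simp at hx)]
  simpa using (p.transfer _ hp).edist_le

lemma exists_walk_length_eq_davoid (h : davoid G a b x ≠ ⊤) :
    ∃ p : G.Walk a b, x ∉ p.support ∧ (p.length : ℕ∞) = davoid G a b x := by
  unfold davoid at h ⊢
  split_ifs at h ⊢ with hab
  · exact absurd rfl h
  obtain ⟨p, hp⟩ := exists_walk_of_edist_ne_top h
  push Not at hab
  exact ⟨p.mapLe (avoid_le x), by simpa using p.notMem_support_of_avoid hab.1,
    by simpa using hp⟩

lemma edist_le_davoid : G.edist a b ≤ davoid G a b x := by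
  unfold davoid
  split_ifs
  · exact le_top
  · exact edist_anti (avoid_le x)

lemma dset_le_dsetAvoid : dset G v B ≤ dsetAvoid G v B x :=
  iInf₂_mono fun _ _ => edist_le_davoid

lemma dsetAvoid_le_davoid (hb : b ∈ B) : dsetAvoid G v B x ≤ davoid G v b x :=
  iInf₂_le b hb

lemma exists_walk_of_mem_ballTrunc {w : V} {ε : ℝ} (hε : 0 ≤ ε)
    (hw : w ∈ ballTrunc G v A B x ε) :
    ∃ p : G.Walk v w, x ∉ p.support ∧
      ENNReal.ofReal (1 + ε) * p.length < (dsetAvoid G v B x : ℝ≥0∞) := by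
  have hfin : davoid G v w x ≠ ⊤ := by
    intro htop
    have := hw.2
    rw [htop, ENat.toENNReal_top,
      ENNReal.mul_top (ENNReal.ofReal_pos.2 (by linarith : (0 : ℝ) < 1 + ε)).ne'] at this
    exact not_top_lt this
  obtain ⟨p, hxp, hp⟩ := exists_walk_length_eq_davoid hfin
  refine ⟨p, hxp, ?_⟩
  simpa [← hp] using hw.2

lemma edist_lt_length_of_notMem_support_dropUntil [DecidableEq V] {u w y : V} (hu : u ∈ B)
    (q : G.Walk v u) (p : G.Walk v w) (hyp : y ∈ p.support) (hyq : y ∈ q.support)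
    (hxp : x ∉ p.support) (hxq : x ∉ (q.dropUntil y hyq).support)
    (hp : (p.length : ℕ∞) < dsetAvoid G v B x) :
    G.edist v w < q.length := by
  have hx : x ∉ ((p.takeUntil y hyp).append (q.dropUntil y hyq)).support := by
    rw [Walk.support_append, List.mem_append, not_or]
    exact ⟨fun h => hxp (p.support_takeUntil_subset_support hyp h),
      fun h => hxq (List.mem_of_mem_tail h)⟩
  have hlen : p.length < (p.takeUntil y hyp).length + (q.dropUntil y hyq).length := by
    have := hp.trans_le ((dsetAvoid_le_davoid hu).trans (davoid_le_length _ hx))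
    rwa [Walk.length_append, Nat.cast_lt] at this
  have hp' := congrArg Walk.length (p.take_spec hyp)
  have hq' := congrArg Walk.length (q.take_spec hyq)
  rw [Walk.length_append] at hp' hq'
  calc G.edist v w ≤ ((q.takeUntil y hyq).append (p.dropUntil y hyp)).length := Walk.edist_le _
    _ < q.length := by rw [Walk.length_append]; exact_mod_cast (by omega)

end avoid

lemma ENNReal.natCast_lt_ofReal_mul_natCast {c : ℝ} (hc : 0 ≤ c) {m n : ℕ}
    (h : (m : ℝ) < c * n) : (m : ℝ≥0∞) < ENNReal.ofReal c * n := by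
  rw [← ENNReal.ofReal_natCast, ← ENNReal.ofReal_natCast n, ← ENNReal.ofReal_mul hc,
    ENNReal.ofReal_lt_ofReal_iff_of_nonneg (Nat.cast_nonneg m)]
  exact h

section cover

variable {V : Type*} [DecidableEq V] {G : SimpleGraph V} {v u : V} {A B : Set V}

lemma ballTrunc_subset_ball_union_biUnion_ballAvoid (hu : u ∈ B) (q : G.Walk v u) (hq : q.IsPath)
    (hqB : (q.length : ℕ∞) = dset G v B) {ε : ℝ} (hε : 0 ≤ ε) {S : Set V}
    (hS : ∀ x ∈ q.support, x ≠ v → ∃ y ∈ S, ∃ _ : y ∈ q.support,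
      q.support.idxOf x ≤ q.support.idxOf y ∧
      (dsetAvoid G v B x : ℝ≥0∞) < ENNReal.ofReal (1 + ε) * dsetAvoid G v B y) (x : V) :
    ballTrunc G v A B x ε ⊆ ball G v A B ∪ ⋃ y ∈ S, ballAvoid G v A B y := by
  intro w hw
  obtain ⟨p, hxp, hp⟩ := exists_walk_of_mem_ballTrunc hε hw
  by_cases hdetour : ∃ y, ∃ hyp : y ∈ p.support, ∃ hyq : y ∈ q.support,
      x ∉ (q.dropUntil y hyq).support
  · obtain ⟨y, hyp, hyq, hxq⟩ := hdetour
    refine Or.inl ⟨hw.1,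
      hqB ▸ edist_lt_length_of_notMem_support_dropUntil hu q p hyp hyq hxp hxq ?_⟩
    rw [← ENat.toENNReal_lt, ENat.toENNReal_coe]
    exact (le_mul_of_one_le_left' (ENNReal.one_le_ofReal.2 (by linarith))).trans_lt hp
  · push Not at hdetour
    have hxq : x ∈ q.support := by
      simpa using hdetour v p.start_mem_support q.start_mem_support
    obtain ⟨y, hyS, hyq, hxy, hlt⟩ := hS x hxq fun h => hxp (h ▸ p.start_mem_support)
    have hyp : y ∉ p.support := fun hyp => hxp <| by
      have hyx := hq.idxOf_le_of_mem_support_dropUntil hyq (hdetour y hyp hyq)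
      rwa [(List.idxOf_inj hxq).1 (le_antisymm hxy hyx)]
    refine Or.inr (Set.mem_biUnion hyS ⟨hw.1, (davoid_le_length p hyp).trans_lt ?_⟩)
    rw [← ENat.toENNReal_lt, ENat.toENNReal_coe, ← ENNReal.mul_lt_mul_iff_right
      (ENNReal.ofReal_pos.2 (by linarith : (0 : ℝ) < 1 + ε)).ne' ENNReal.ofReal_ne_top]
    exact hp.trans hlt

end cover

theorem stmt11_general {V : Type*} (G : SimpleGraph V) (v : V)
    (A B : Set V) (hvB : v ∉ B) (ε : ℝ) (hε : 0 < ε)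
    (u : V) (hu : u ∈ B) (hnear : G.edist v u = dset G v B)
    (Q : G.Walk v u) (hQ : Q.IsPath) (hQlen : (Q.length : ℕ∞) = G.edist v u)
    (h : ℕ)
    (hub : ∀ x ∈ Q.support, x ≠ v → dsetAvoid G v B x ≤ (h : ℕ∞)) :
    ∃ S : Finset V, (∀ s ∈ S, s ∈ Q.support) ∧ v ∉ S ∧
      (S.card : ℝ) ≤ (⌊Real.log h / Real.log (1 + ε)⌋ : ℝ) + 1 ∧
      ∀ x : V, x ≠ v → ballTrunc G v A B x ε ⊆
        ball G v A B ∪ ⋃ x' ∈ (S : Set V), ballAvoid G v A B x' := by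
  have hQB : (Q.length : ℕ∞) = dset G v B := hQlen.trans hnear
  have hQpos : 1 ≤ Q.length :=
    Nat.one_le_iff_ne_zero.2 fun h0 => hvB (Walk.eq_of_length_eq_zero h0 ▸ hu)
  set d : V → ℕ := fun y => (dsetAvoid G v B y).toNat
  have hd : ∀ y ∈ Q.support, y ≠ v → (d y : ℕ∞) = dsetAvoid G v B y := fun y hy hyv =>
    ENat.natCast_toNat (ne_top_of_le_ne_top (ENat.natCast_ne_top h) (hub y hy hyv))
  obtain ⟨S, hST, hcard, hcover⟩ := (Q.support.toFinset.erase v).exists_subset_forall_le_lt_mul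
    (fun y => (d y : ℝ)) Q.support.idxOf (b := 1 + ε) (h := h) (by linarith) fun y hy => by
      obtain ⟨hyv, hyQ⟩ := Finset.mem_erase.1 hy
      have hdy := hd y (List.mem_toFinset.1 hyQ) hyv
      have hLd : (Q.length : ℕ∞) ≤ d y := hdy ▸ hQB ▸ dset_le_dsetAvoid
      have hdh : (d y : ℕ∞) ≤ h := hdy ▸ hub y (List.mem_toFinset.1 hyQ) hyv
      exact ⟨by exact_mod_cast hQpos.trans (by exact_mod_cast hLd), by exact_mod_cast hdh⟩
  refine ⟨S, fun s hs => List.mem_toFinset.1 (Finset.mem_of_mem_erase (hST hs)),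
    fun hvS => Finset.ne_of_mem_erase (hST hvS) rfl, ?_,
    fun x _ => ballTrunc_subset_ball_union_biUnion_ballAvoid hu Q hQ hQB hε.le ?_ x⟩
  · calc (S.card : ℝ) ≤ ((⌊Real.logb (1 + ε) h⌋ + 1).toNat : ℤ) := by exact_mod_cast hcard
      _ = _ := Real.toNat_floor_logb_natCast_add_one (by linarith) h
  · intro x hxQ hxv
    obtain ⟨y, hyS, hxy, hlt⟩ := hcover x (by simp [hxv, hxQ])
    obtain ⟨hyv, hyQ⟩ := Finset.mem_erase.1 (hST hyS)
    rw [List.mem_toFinset] at hyQ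
    refine ⟨y, hyS, hyQ, hxy, ?_⟩
    rw [← hd x hxQ hxv, ← hd y hyQ hyv]
    simpa using ENNReal.natCast_lt_ofReal_mul_natCast (by linarith) hlt

/-- let `u ∈ B` be nearest to `v ∉ B`, `Q` a fixed shortest `v`–`u`
path, and suppose `δ(v,B,x)` is finite for all `x ≠ v` on `Q` with maximum `h`.
Then there is a set `S` of vertices of `Q`, `v ∉ S`,
`|S| ≤ ⌊log h / log(1+ε)⌋ + 1`, such that for every `x ≠ v`,
`Ball^x(v,A,B,ε) ⊆ Ball(v,A,B) ∪ ⋃_{x'∈S} Ball^{x'}(v,A,B)`. -/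
theorem stmt11 {V : Type*} [Fintype V] [DecidableEq V] (G : SimpleGraph V) (v : V)
    (A B : Set V) (hvB : v ∉ B) (ε : ℝ) (hε : 0 < ε)
    (u : V) (hu : u ∈ B) (hnear : G.edist v u = dset G v B)
    (Q : G.Walk v u) (hQ : Q.IsPath) (hQlen : (Q.length : ℕ∞) = G.edist v u)
    (h : ℕ)
    (hub : ∀ x ∈ Q.support, x ≠ v → dsetAvoid G v B x ≤ (h : ℕ∞))
    (hattain : ∃ x ∈ Q.support, x ≠ v ∧ dsetAvoid G v B x = (h : ℕ∞)) :
    ∃ S : Finset V, (∀ s ∈ S, s ∈ Q.support) ∧ v ∉ S ∧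
      (S.card : ℝ) ≤ (⌊Real.log h / Real.log (1 + ε)⌋ : ℝ) + 1 ∧
      ∀ x : V, x ≠ v → ballTrunc G v A B x ε ⊆
        ball G v A B ∪ ⋃ x' ∈ (S : Set V), ballAvoid G v A B x' :=
  stmt11_general G v A B hvB ε hε u hu hnear Q hQ hQlen h hub
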